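/- arXiv:1111.1367 — 12 statements merged into one kernel-verified Lean document; each statement's English description precedes it below -/
import Mathlib

section
/- If h : ℕ^n → ℕ^n preserves the lexicographic order (is a lexicographic embedding), then for all x₁,…,xₙ, the first coordinate satisfies x₁ ≤ h₁(x₁,…,xₙ) < h₁(x₁+1,0,…,0). -/
/-- Strict lexicographic order on `Fin n → ℕ`. -/
def LexLt {n m : ℕ} (x : Fin n → ℕ) (y : Fin m → ℕ) : Prop :=
  ∃ i : ℕ, ∃ hi : i < n, ∃ hi' : i < m,
    (∀ j : ℕ, (hj : j < i) → x ⟨j, lt_trans hj hi⟩ = y ⟨j, lt_trans hj hi'⟩) ∧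
    x ⟨i, hi⟩ < y ⟨i, hi'⟩

/-- A lexicographic embedding: strictly monotone for the lexicographic order. -/
def LexEmb {n : ℕ} (h : (Fin n → ℕ) → (Fin n → ℕ)) : Prop :=
  ∀ x y : Fin n → ℕ, LexLt x y → LexLt (h x) (h y)

lemma lexLt_iff_toLex_lt {n : ℕ} {x y : Fin n → ℕ} :
    LexLt x y ↔ toLex x < toLex y := by
  constructor
  · rintro ⟨i, hi, hi', heq, hlt⟩
    exact ⟨⟨i, hi⟩, fun j hj => by
      simpa [Fin.eta] using heq j.val hj, hlt⟩
  · rintro ⟨i, heq, hlt⟩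
    exact ⟨i.val, i.isLt, i.isLt, fun j hj => heq ⟨j, lt_trans hj i.isLt⟩ hj,
      by simpa [Fin.eta] using hlt⟩

lemma lexEmb_not_lt {n : ℕ} {h : (Fin n → ℕ) → (Fin n → ℕ)} (hemb : LexEmb h)
    (z : Fin n → ℕ) : ¬ LexLt (h z) z := by
  have h1 : WellFounded ((· < ·) : Lex (Fin n → ℕ) → Lex (Fin n → ℕ) → Prop) :=
    IsWellFounded.wf
  have hwf : WellFounded (fun a b : Fin n → ℕ => LexLt a b) :=
    Subrelation.wf (fun {a b} hab => lexLt_iff_toLex_lt.mp hab) (InvImage.wf toLex h1)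
  intro hcon
  obtain ⟨m, hm, hmin⟩ := hwf.has_min {z | LexLt (h z) z} ⟨z, hcon⟩
  exact hmin (h m) (hemb _ _ hm) hm

lemma lexEmb_first_le' {n : ℕ} (hn : 0 < n) {h : (Fin n → ℕ) → (Fin n → ℕ)}
    (hemb : LexEmb h) (z : Fin n → ℕ) : z ⟨0, hn⟩ ≤ h z ⟨0, hn⟩ := by
  by_contra hc
  push_neg at hc
  exact lexEmb_not_lt hemb z ⟨0, hn, hn, fun j hj => absurd hj (Nat.not_lt_zero j), hc⟩

lemma lexLt_first_le {n : ℕ} (hn : 0 < n) {x y : Fin n → ℕ} (hxy : LexLt x y) :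
    x ⟨0, hn⟩ ≤ y ⟨0, hn⟩ := by
  obtain ⟨i, hi, hi', heq, hlt⟩ := hxy
  rcases Nat.eq_zero_or_pos i with rfl | hpos
  · exact le_of_lt hlt
  · exact le_of_eq (heq 0 hpos)

theorem stmt0 {n : ℕ} (hn : 0 < n) (h : (Fin n → ℕ) → (Fin n → ℕ)) (hemb : LexEmb h)
    (x : Fin n → ℕ) :
    x ⟨0, hn⟩ ≤ h x ⟨0, hn⟩ ∧
      h x ⟨0, hn⟩ < h (fun j => if j = ⟨0, hn⟩ then x ⟨0, hn⟩ + 1 else 0) ⟨0, hn⟩ := by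
  set a := x ⟨0, hn⟩ with ha
  set y : Fin n → ℕ := fun j => if j = ⟨0, hn⟩ then a + 1 else 0 with hy
  have hfirst : x ⟨0, hn⟩ ≤ h x ⟨0, hn⟩ := lexEmb_first_le' hn hemb x
  refine ⟨hfirst, ?_⟩
  have hxy : LexLt x y := by
    refine ⟨0, hn, hn, fun j hj => absurd hj (Nat.not_lt_zero j), ?_⟩
    simp [hy, ha]
  have hhxy : LexLt (h x) (h y) := hemb x y hxy
  by_contra hc
  push_neg at hc
  have hcle : h y ⟨0, hn⟩ ≤ h x ⟨0, hn⟩ := hc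
  have hle : h x ⟨0, hn⟩ ≤ h y ⟨0, hn⟩ := lexLt_first_le hn hhxy
  have hceq : h x ⟨0, hn⟩ = h y ⟨0, hn⟩ := le_antisymm hle hcle
  -- case n = 1
  rcases Nat.lt_or_ge n 2 with hn1 | hn2
  · obtain ⟨i, hi, hi', heq, hlt⟩ := hhxy
    have hi0 : i = 0 := by omega
    subst hi0
    exact absurd hlt (not_lt_of_ge hcle)
  -- case n ≥ 2
  have h1n : 1 < n := hn2
  set m : ℕ := n - 1 with hm
  have hmn : m + 1 = n := Nat.succ_pred_eq_of_pos hn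
  have hm0 : 0 < m := by omega
  -- the embedding s of ℕ^m into the interval (x, y)
  set s : (Fin m → ℕ) → (Fin n → ℕ) := fun t j =>
    if j.val = 0 then a
    else if j.val = 1 then x ⟨1, h1n⟩ + 1 + t ⟨0, hm0⟩
    else t ⟨j.val - 1, by omega⟩ with hs
  have hxs : ∀ t, LexLt x (s t) := by
    intro t
    refine ⟨1, h1n, h1n, fun j hj => ?_, ?_⟩
    · interval_cases j
      simp [hs, ha]
    · simp [hs]
      omega
  have hsy : ∀ t, LexLt (s t) y := by
    intro t
    refine ⟨0, hn, hn, fun j hj => absurd hj (Nat.not_lt_zero j), ?_⟩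
    simp [hs, hy]
  have hsc : ∀ t, h (s t) ⟨0, hn⟩ = h x ⟨0, hn⟩ := by
    intro t
    have h1 := lexLt_first_le hn (hemb x (s t) (hxs t))
    have h2 := lexLt_first_le hn (hemb (s t) y (hsy t))
    omega
  have hs_mono : ∀ t t' : Fin m → ℕ, LexLt t t' → LexLt (s t) (s t') := by
    rintro t t' ⟨i, hi, hi', heq, hlt⟩
    refine ⟨i + 1, by omega, by omega, fun j hj => ?_, ?_⟩
    · rcases Nat.eq_zero_or_pos j with rfl | hj0
      · simp [hs]
      · rcases Nat.eq_or_lt_of_le hj0 with hj1 | hj2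
        · -- j = 1, and 1 < i + 1 so 0 < i
          have h0i : 0 < i := by omega
          have := heq 0 h0i
          simp [hs, ← hj1, this]
        · -- j ≥ 2
          have hjm : j - 1 < i := by omega
          have := heq (j - 1) hjm
          have hj0' : ¬ j = 0 := by omega
          have hj1' : ¬ j = 1 := by omega
          simp [hs, hj0', hj1', this]
    · rcases Nat.eq_zero_or_pos i with rfl | hi0
      · simpa [hs] using hlt
      · have : ¬ i + 1 = 1 := by omega
        simpa [hs, this, hi0.ne'] using hlt
  -- the induced embedding g on ℕ^m (tails of h ∘ s)
  set g : (Fin m → ℕ) → (Fin m → ℕ) := fun t j => h (s t) ⟨j.val + 1, by omega⟩ with hg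
  have hg_mono : LexEmb g := by
    intro t t' htt'
    obtain ⟨i, hi, hi', heq, hlt⟩ := hemb (s t) (s t') (hs_mono t t' htt')
    have hi0 : i ≠ 0 := by
      rintro rfl
      have := (hsc t).trans (hsc t').symm
      exact absurd hlt (by omega)
    refine ⟨i - 1, by omega, by omega, fun j hj => ?_, ?_⟩
    · have := heq (j + 1) (by omega)
      simpa [hg] using this
    · have : i - 1 + 1 = i := by omega
      simpa [hg, this] using hlt
  -- g t second coordinate bounded by h y at coordinate 1
  have hbound : ∀ t, g t ⟨0, hm0⟩ ≤ h y ⟨1, h1n⟩ := by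
    intro t
    obtain ⟨i, hi, hi', heq, hlt⟩ := hemb (s t) y (hsy t)
    have hi0 : i ≠ 0 := by
      rintro rfl
      have := hsc t
      exact absurd hlt (by omega)
    rcases Nat.eq_or_lt_of_le (Nat.one_le_iff_ne_zero.mpr hi0) with hi1 | hi2
    · have : g t ⟨0, hm0⟩ = h (s t) ⟨1, h1n⟩ := rfl
      rw [this]
      have : (⟨1, h1n⟩ : Fin n) = ⟨i, hi'⟩ := by simp [← hi1]
      rw [this]
      exact le_of_lt hlt
    · have hgt : g t ⟨0, hm0⟩ = h (s t) ⟨1, h1n⟩ := rfl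
      rw [hgt]
      exact le_of_eq (heq 1 hi2)
  -- contradiction: take t with huge first coordinate
  set t : Fin m → ℕ := fun j => if j.val = 0 then h y ⟨1, h1n⟩ + 1 else 0 with ht
  have h1 : t ⟨0, hm0⟩ ≤ g t ⟨0, hm0⟩ := lexEmb_first_le' hm0 hg_mono t
  have h2 : t ⟨0, hm0⟩ = h y ⟨1, h1n⟩ + 1 := by simp [ht]
  have h3 := hbound t
  omega
end

section
/- For every k-coloring c : ℕ^n → Fin k there exists a color d < k such that there exist infinitely many x₁ such that there exist infinitely many x₂ such that … there exist infinitely many xₙ with c(x₁,…,xₙ) = d. -/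
/-- `P` holds for infinitely many (unboundedly many) naturals. -/
def InfOften (P : ℕ → Prop) : Prop := ∀ b : ℕ, ∃ x, b ≤ x ∧ P x

/-- Nested "there exist infinitely many x₁ … infinitely many xₙ" quantifier. -/
def NestedInf : (n : ℕ) → ((Fin n → ℕ) → Prop) → Prop
  | 0, P => P ![]
  | n + 1, P => InfOften (fun x => NestedInf n (fun v => P (Fin.cons x v)))

lemma key {k : ℕ} : ∀ (n : ℕ) (c : (Fin n → ℕ) → Fin k),
    ∃ d : Fin k, NestedInf n (fun v => c v = d) := by
  intro n
  induction n with
  | zero => exact fun c => ⟨c ![], rfl⟩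
  | succ n ih =>
    intro c
    choose d hd using fun x => ih (fun v => c (Fin.cons x v))
    obtain ⟨e, he⟩ := Finite.exists_infinite_fiber d
    refine ⟨e, fun b => ?_⟩
    have hinf : (d ⁻¹' {e}).Infinite := Set.infinite_coe_iff.mp he
    obtain ⟨x, hx, hbx⟩ := hinf.exists_gt b
    refine ⟨x, hbx.le, ?_⟩
    have := hd x
    rwa [show d x = e from hx] at this

theorem stmt3 {n k : ℕ} (hn : 0 < n) (hk : 0 < k) (c : (Fin n → ℕ) → Fin k) :
    ∃ d : Fin k, NestedInf n (fun v => c v = d) := by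
  exact key n c
end

section
/- For every 2-coloring c : ℕ² → Fin 2 there is a color d and a lexicographic embedding h : ℕ² → ℕ² (with respect to the lexicographic order on ℕ²) such that c(h(x,y)) = d for all (x,y) ∈ ℕ². -/
/-- Strict lexicographic order on `ℕ × ℕ`. -/
def LexLt2 (p q : ℕ × ℕ) : Prop := p.1 < q.1 ∨ (p.1 = q.1 ∧ p.2 < q.2)

lemma pigeon2 (f : ℕ → Fin 2) : ∃ d, {n | f n = d}.Infinite := by
  obtain ⟨d, hd⟩ := Finite.exists_infinite_fiber f
  exact ⟨d, Set.infinite_coe_iff.mp hd⟩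

theorem stmt5 (c : ℕ × ℕ → Fin 2) :
    ∃ d : Fin 2, ∃ h : ℕ × ℕ → ℕ × ℕ,
      (∀ p q, LexLt2 p q → LexLt2 (h p) (h q)) ∧ ∀ p, c (h p) = d := by
  have hrow : ∀ x : ℕ, ∃ d, {y | c (x, y) = d}.Infinite := fun x =>
    pigeon2 (fun y => c (x, y))
  choose D hD using hrow
  obtain ⟨d, hd⟩ := pigeon2 D
  set f : ℕ → ℕ := Nat.nth (fun x => D x = d) with hf
  have hfm : StrictMono f := Nat.nth_strictMono hd
  have hfd : ∀ x, D (f x) = d := fun x => Nat.nth_mem_of_infinite hd x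
  have hinf : ∀ x, {y | c (f x, y) = d}.Infinite := fun x => by
    have := hD (f x); rwa [hfd x] at this
  refine ⟨d, fun p => (f p.1, Nat.nth (fun y => c (f p.1, y) = d) p.2), ?_, ?_⟩
  · rintro p q (h1 | ⟨h1, h2⟩)
    · exact Or.inl (hfm h1)
    · refine Or.inr ⟨by simp only [h1], ?_⟩
      simp only [h1]
      exact Nat.nth_strictMono (hinf q.1) h2
  · intro p
    exact Nat.nth_mem_of_infinite (hinf p.1) p.2
end

section
/- For every 2-coloring c : ℕ² → Fin 2 there is a color d and a set A ⊆ ℕ² with c constantly d on A such that A with the induced lexicographic order is order-isomorphic to ℕ² with the lexicographic order. -/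
private lemma lexlt2_asymm {p q : ℕ × ℕ} (h : LexLt2 p q) (h' : LexLt2 q p) : False := by
  rcases h with h | ⟨h1, h2⟩ <;> rcases h' with h' | ⟨h1', h2'⟩ <;> omega

private lemma lexlt2_trichot (p q : ℕ × ℕ) : p = q ∨ LexLt2 p q ∨ LexLt2 q p := by
  rcases lt_trichotomy p.1 q.1 with h | h | h
  · exact Or.inr (Or.inl (Or.inl h))
  · rcases lt_trichotomy p.2 q.2 with h2 | h2 | h2
    · exact Or.inr (Or.inl (Or.inr ⟨h, h2⟩))
    · exact Or.inl (Prod.ext h h2)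
    · exact Or.inr (Or.inr (Or.inr ⟨h.symm, h2⟩))
  · exact Or.inr (Or.inr (Or.inl h))

theorem stmt6 (c : ℕ × ℕ → Fin 2) :
    ∃ d : Fin 2, ∃ A : Set (ℕ × ℕ), (∀ p ∈ A, c p = d) ∧
      ∃ e : (ℕ × ℕ) ≃ A, ∀ p q : ℕ × ℕ, LexLt2 p q ↔ LexLt2 (e p : ℕ × ℕ) (e q : ℕ × ℕ) := by
  have hd : ∃ d : Fin 2, {n | {m | c (n, m) = d}.Infinite}.Infinite := by
    by_contra h
    push_neg at h
    have hsub : (Set.univ : Set ℕ) ⊆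
        {n | {m | c (n, m) = 0}.Infinite} ∪ {n | {m | c (n, m) = 1}.Infinite} := by
      intro n _
      by_contra hn
      simp only [Set.mem_union, Set.mem_setOf_eq, not_or, Set.not_infinite] at hn
      have hfin : ({m | c (n, m) = 0} ∪ {m | c (n, m) = 1}).Finite := hn.1.union hn.2
      have huniv : ({m | c (n, m) = 0} ∪ {m | c (n, m) = 1}) = Set.univ := by
        ext m
        simp only [Set.mem_union, Set.mem_setOf_eq, Set.mem_univ, iff_true]
        have := (c (n, m)).isLt
        rcases Fin.exists_fin_two.mp ⟨c (n, m), rfl⟩ with _ | _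
        · omega
        · omega
      rw [huniv] at hfin
      exact Set.infinite_univ hfin
    have : (Set.univ : Set ℕ).Finite := Set.Finite.subset ((h 0).union (h 1)) hsub
    exact Set.infinite_univ this
  obtain ⟨d, hP⟩ := hd
  set P : ℕ → Prop := fun n => {m | c (n, m) = d}.Infinite with hPdef
  have hP' : (setOf P).Infinite := hP
  set Q : ℕ → ℕ → Prop := fun n m => c (Nat.nth P n, m) = d with hQdef
  have hQ : ∀ n, (setOf (Q n)).Infinite := fun n => Nat.nth_mem_of_infinite hP' n
  set F : ℕ × ℕ → ℕ × ℕ := fun p => (Nat.nth P p.1, Nat.nth (Q p.1) p.2) with hFdef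
  have hmono : ∀ p q : ℕ × ℕ, LexLt2 p q → LexLt2 (F p) (F q) := by
    rintro ⟨a, b⟩ ⟨a', b'⟩ (h | ⟨h1, h2⟩)
    · exact Or.inl ((Nat.nth_lt_nth hP').mpr h)
    · dsimp at h1 h2
      subst h1
      exact Or.inr ⟨rfl, (Nat.nth_lt_nth (hQ a)).mpr h2⟩
  have hinj : Function.Injective F := by
    intro p q hpq
    rcases lexlt2_trichot p q with h | h | h
    · exact h
    · exact absurd (hpq ▸ hmono p q h) (fun hh => lexlt2_asymm hh hh)
    · exact absurd (hpq ▸ hmono q p h) (fun hh => lexlt2_asymm hh hh)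
  refine ⟨d, Set.range F, ?_, Equiv.ofInjective F hinj, ?_⟩
  · rintro p ⟨q, rfl⟩
    exact Nat.nth_mem_of_infinite (hQ q.1) q.2
  · intro p q
    constructor
    · intro h; exact hmono p q h
    · intro h
      rcases lexlt2_trichot p q with rfl | h' | h'
      · exact absurd h (fun hh => lexlt2_asymm hh hh)
      · exact h'
      · exact absurd (hmono q p h') (fun hh => lexlt2_asymm hh h)
end

section
/- For every coloring c : ℕ² → Fin k there exist a color d and an infinite set H ⊆ ℕ such that for every x ∈ H, the set {y ∈ ℕ : c(x,y) = d} is infinite. -/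
theorem stmt7 {k : ℕ} (hk : 0 < k) (c : ℕ → ℕ → Fin k) :
    ∃ d : Fin k, ∃ H : Set ℕ, H.Infinite ∧
      ∀ x ∈ H, {y : ℕ | c x y = d}.Infinite := by
  have hx : ∀ x : ℕ, ∃ d : Fin k, {y : ℕ | c x y = d}.Infinite := by
    intro x
    by_contra h
    push_neg at h
    have : (Set.univ : Set ℕ).Finite := by
      have : (Set.univ : Set ℕ) = ⋃ d : Fin k, {y : ℕ | c x y = d} := by
        ext y; simp
      rw [this]
      exact Set.finite_iUnion h
    exact Set.infinite_univ this
  choose f hf using hx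
  haveI : Nonempty (Fin k) := ⟨⟨0, hk⟩⟩
  obtain ⟨d, hd⟩ := Finite.exists_infinite_fiber f
  refine ⟨d, f ⁻¹' {d}, ?_, ?_⟩
  · simpa [Set.infinite_coe_iff] using hd
  · intro x hx
    have : f x = d := hx
    rw [← this]; exact hf x
end

section
/- For every coloring c : ℕ² → Fin k there exist a color d and a strictly increasing function h : ℕ → ℕ such that for all 0 < i₁ < i₂, the rectangle [h(i₁−1), h(i₁)−1] × [h(i₂−1), h(i₂)−1] contains a pair (x,y) with c(x,y) = d. -/
theorem stmt8 {k : ℕ} (hk : 0 < k) (c : ℕ → ℕ → Fin k) :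
    ∃ d : Fin k, ∃ h : ℕ → ℕ, StrictMono h ∧
      ∀ i₁ i₂ : ℕ, 0 < i₁ → i₁ < i₂ →
        ∃ x y : ℕ, h (i₁ - 1) ≤ x ∧ x ≤ h i₁ - 1 ∧
          h (i₂ - 1) ≤ y ∧ y ≤ h i₂ - 1 ∧ c x y = d := by
  classical
  -- Step 1: find a color d such that infinitely many x have infinitely many
  -- y with c x y = d.
  have h1 : ∃ d : Fin k, {x | {y | c x y = d}.Infinite}.Infinite := by
    by_contra hcon
    push_neg at hcon
    have hfin : (⋃ d : Fin k, {x | {y | c x y = d}.Infinite}).Finite :=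
      Set.finite_iUnion (fun d => hcon d)
    have hcover : (Set.univ : Set ℕ) ⊆ ⋃ d, {x | {y | c x y = d}.Infinite} := by
      intro x _
      by_contra hx
      simp only [Set.mem_iUnion, Set.mem_setOf_eq] at hx
      push_neg at hx
      have hsub : (Set.univ : Set ℕ) ⊆ ⋃ d : Fin k, {y | c x y = d} := by
        intro y _; exact Set.mem_iUnion.mpr ⟨c x y, rfl⟩
      exact Set.infinite_univ
        ((Set.finite_iUnion (fun d => hx d)).subset hsub)
    exact Set.infinite_univ (hfin.subset hcover)
  obtain ⟨d, hS⟩ := h1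
  -- Step 2: key extension lemma
  have key : ∀ n : ℕ, ∃ N : ℕ, n < N ∧
      (∃ x, n ≤ x ∧ x < N ∧ {y | c x y = d}.Infinite) ∧
      ∀ x, x < n → {y | c x y = d}.Infinite →
        ∃ y, n ≤ y ∧ y < N ∧ c x y = d := by
    intro n
    obtain ⟨x₀, hx₀S, hx₀n⟩ := hS.exists_gt n
    set f : ℕ → ℕ := fun x =>
      if hx : {y | c x y = d}.Infinite then (hx.exists_gt n).choose else 0 with hf
    refine ⟨max x₀ ((Finset.range n).sup f) + 1, ?_, ⟨x₀, hx₀n.le, ?_, hx₀S⟩, ?_⟩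
    · exact lt_of_lt_of_le hx₀n (le_trans (le_max_left _ _) (Nat.le_succ _))
    · exact Nat.lt_succ_of_le (le_max_left _ _)
    · intro x hxn hxinf
      have hspec := (hxinf.exists_gt n).choose_spec
      refine ⟨f x, ?_, ?_, ?_⟩
      · have : f x = (hxinf.exists_gt n).choose := by simp [hf, hxinf]
        rw [this]; exact hspec.2.le
      · have hle : f x ≤ (Finset.range n).sup f :=
          Finset.le_sup (Finset.mem_range.mpr hxn)
        exact Nat.lt_succ_of_le (le_trans hle (le_max_right _ _))
      · have : f x = (hxinf.exists_gt n).choose := by simp [hf, hxinf]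
        rw [this]; exact hspec.1
  -- Step 3: build the sequence
  let g : ℕ → ℕ := fun n => Nat.rec 0 (fun m ih => (key ih).choose) n
  have hg : ∀ n, g (n + 1) = (key (g n)).choose := fun n => rfl
  have hmono : StrictMono g := by
    apply strictMono_nat_of_lt_succ
    intro n
    rw [hg]
    exact (key (g n)).choose_spec.1
  refine ⟨d, g, hmono, ?_⟩
  intro i₁ i₂ hi₁ hi₁₂
  -- the interval (g (i₁-1), g i₁) contains an element x with infinite d-fiber
  obtain ⟨x, hx1, hx2, hxinf⟩ := by
    have := (key (g (i₁ - 1))).choose_spec.2.1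
    rw [← hg (i₁ - 1), Nat.sub_add_cancel hi₁] at this
    exact this
  -- x < g (i₂ - 1)
  have hxlt : x < g (i₂ - 1) := lt_of_lt_of_le hx2 (hmono.monotone (Nat.le_sub_one_of_lt hi₁₂))
  obtain ⟨y, hy1, hy2, hyc⟩ := by
    have := (key (g (i₂ - 1))).choose_spec.2.2 x hxlt hxinf
    rw [← hg (i₂ - 1), Nat.sub_add_cancel (lt_of_le_of_lt (Nat.zero_le _) hi₁₂)] at this
    exact this
  exact ⟨x, y, hx1, Nat.le_sub_one_of_lt hx2, hy1, Nat.le_sub_one_of_lt hy2, hyc⟩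
end

section
/- Suppose c : ℕ² → Fin k and there exist a color d and a strictly increasing g : ℕ → ℕ such that for every i ≥ 1 the set ⋃_{x = g(i−1)}^{g(i)−1} {y ∈ ℕ : c(x,y) = d} is infinite. Then there exist a color d and a strictly increasing h : ℕ → ℕ such that for all 0 < i₁ < i₂, the rectangle [h(i₁−1), h(i₁)−1] × [h(i₂−1), h(i₂)−1] contains a pair (x,y) with c(x,y) = d. -/
theorem stmt10 {k : ℕ} (hk : 0 < k) (c : ℕ → ℕ → Fin k)
    (hg : ∃ d : Fin k, ∃ g : ℕ → ℕ, StrictMono g ∧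
      ∀ i : ℕ, 1 ≤ i →
        {y : ℕ | ∃ x, g (i - 1) ≤ x ∧ x ≤ g i - 1 ∧ c x y = d}.Infinite) :
    ∃ d : Fin k, ∃ h : ℕ → ℕ, StrictMono h ∧
      ∀ i₁ i₂ : ℕ, 0 < i₁ → i₁ < i₂ →
        ∃ x y : ℕ, h (i₁ - 1) ≤ x ∧ x ≤ h i₁ - 1 ∧
          h (i₂ - 1) ≤ y ∧ y ≤ h i₂ - 1 ∧ c x y = d := by
  obtain ⟨d, g, hgm, hinf⟩ := hg
  set S : ℕ → Set ℕ := fun i => {y : ℕ | ∃ x, g (i - 1) ≤ x ∧ x ≤ g i - 1 ∧ c x y = d}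
    with hS
  have key : ∀ n : ℕ, ∃ M : ℕ, n < M ∧ ∀ s, 1 ≤ s → s ≤ n →
      ∃ y ∈ S s, g n ≤ y ∧ y ≤ g M - 1 := by
    intro n
    have hy : ∀ s : ℕ, 1 ≤ s → ∃ y ∈ S s, g n < y := fun s hs => (hinf s hs).exists_gt (g n)
    choose! y hyS hyg using hy
    set N := (Finset.Icc 1 n).sup y with hN
    refine ⟨max (N + 1) (n + 1), lt_of_lt_of_le (Nat.lt_succ_self n) (le_max_right _ _), ?_⟩
    intro s h1 h2
    refine ⟨y s, hyS s h1, le_of_lt (hyg s h1), ?_⟩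
    have h3 : y s ≤ N := Finset.le_sup (Finset.mem_Icc.mpr ⟨h1, h2⟩)
    have h4 : max (N + 1) (n + 1) ≤ g (max (N + 1) (n + 1)) := hgm.le_apply
    omega
  choose F hFlt hFprop using key
  set m : ℕ → ℕ := fun i => Nat.rec 0 (fun _ mi => F mi) i with hm
  have hmsucc : ∀ i, m (i + 1) = F (m i) := fun i => rfl
  have hmmono : StrictMono m := strictMono_nat_of_lt_succ fun i => hFlt (m i)
  refine ⟨d, g ∘ m, hgm.comp hmmono, ?_⟩
  intro i₁ i₂ h1 h12
  obtain ⟨j, rfl⟩ : ∃ j, i₂ = j + 1 := ⟨i₂ - 1, by omega⟩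
  have hs2 : m (i₁ - 1) + 1 ≤ m j := by
    have h5 : m (i₁ - 1) < m i₁ := hmmono (by omega)
    have h6 : m i₁ ≤ m j := hmmono.monotone (by omega)
    omega
  obtain ⟨yy, hyS, hy1, hy2⟩ := hFprop (m j) (m (i₁ - 1) + 1) (Nat.le_add_left 1 _) hs2
  obtain ⟨x, hx1, hx2, hc⟩ := hyS
  have hmu : m (i₁ - 1) + 1 ≤ m i₁ := by
    have := hmmono (show i₁ - 1 < i₁ by omega); omega
  refine ⟨x, yy, ?_, ?_, ?_, ?_, hc⟩
  · simpa using hx1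
  · have h7 : g (m (i₁ - 1) + 1) ≤ g (m i₁) := hgm.monotone hmu
    simp only [Function.comp_apply]
    omega
  · simpa using hy1
  · simpa [hmsucc j] using hy2
end

section
/- If c : ℕ² → Fin k is a coloring and h : ℕ² → ℕ² is a lexicographic embedding such that c ∘ h is constant with value d, then the function g(i) = h₁(i,0) is strictly increasing and for every i ≥ 1 the set ⋃_{x = g(i−1)}^{g(i)−1} {y ∈ ℕ : c(x,y) = d} is infinite. -/
lemma lexlt2_irrefl (p : ℕ × ℕ) : ¬ LexLt2 p p := by
  rintro (hp | ⟨_, hp⟩) <;> exact lt_irrefl _ hp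

lemma lt_first (h : ℕ × ℕ → ℕ × ℕ)
    (hemb : ∀ p q, LexLt2 p q → LexLt2 (h p) (h q))
    (i : ℕ) (q : ℕ × ℕ) (hq : ∀ n : ℕ, LexLt2 (h (i, n)) q) :
    ∀ n : ℕ, (h (i, n)).1 < q.1 := by
  by_contra hcon
  push_neg at hcon
  obtain ⟨n, hn⟩ := hcon
  have hfirst : ∀ m : ℕ, (h (i, n + m)).1 = q.1 := by
    intro m
    have hle : (h (i, n + m)).1 ≤ q.1 := by
      rcases hq (n + m) with h1 | ⟨h1, _⟩
      · exact le_of_lt h1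
      · exact le_of_eq h1
    have hge : q.1 ≤ (h (i, n + m)).1 := by
      rcases Nat.eq_zero_or_pos m with hm | hm
      · subst hm; simpa using hn
      · have := hemb (i, n) (i, n + m) (Or.inr ⟨rfl, by omega⟩)
        rcases this with h1 | ⟨h1, _⟩
        · exact le_trans hn (le_of_lt h1)
        · exact le_trans hn (le_of_eq h1)
    omega
  have hmono : StrictMono (fun m => (h (i, n + m)).2) := by
    intro a b hab
    have := hemb (i, n + a) (i, n + b) (Or.inr ⟨rfl, by omega⟩)
    rcases this with h1 | ⟨_, h1⟩
    · rw [hfirst a, hfirst b] at h1; omega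
    · exact h1
  have hbd : ∀ m : ℕ, (h (i, n + m)).2 < q.2 := by
    intro m
    rcases hq (n + m) with h1 | ⟨_, h1⟩
    · rw [hfirst m] at h1; omega
    · exact h1
  have h2 : q.2 ≤ (fun m => (h (i, n + m)).2) q.2 := hmono.le_apply
  have h3 := hbd q.2
  simp only at h2
  omega

theorem stmt11 {k : ℕ} (c : ℕ × ℕ → Fin k) (d : Fin k)
    (h : ℕ × ℕ → ℕ × ℕ) (hemb : ∀ p q, LexLt2 p q → LexLt2 (h p) (h q))
    (hconst : ∀ p, c (h p) = d) :
    StrictMono (fun i => (h (i, 0)).1) ∧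
      ∀ i : ℕ, 1 ≤ i →
        {y : ℕ | ∃ x, (h (i - 1, 0)).1 ≤ x ∧ x ≤ (h (i, 0)).1 - 1 ∧
          c (x, y) = d}.Infinite := by
  have hchain : ∀ i : ℕ, ∀ n : ℕ, LexLt2 (h (i, n)) (h (i + 1, 0)) := by
    intro i n
    exact hemb _ _ (Or.inl (by omega))
  have hlt : ∀ i n : ℕ, (h (i, n)).1 < (h (i + 1, 0)).1 := by
    intro i n
    exact lt_first h hemb i (h (i + 1, 0)) (hchain i) n
  have hlow : ∀ i n : ℕ, (h (i, 0)).1 ≤ (h (i, n)).1 := by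
    intro i n
    rcases Nat.eq_zero_or_pos n with hn | hn
    · subst hn; exact le_refl _
    · rcases hemb (i, 0) (i, n) (Or.inr ⟨rfl, hn⟩) with h1 | ⟨h1, _⟩
      · exact le_of_lt h1
      · exact le_of_eq h1
  constructor
  · exact strictMono_nat_of_lt_succ fun i => hlt i 0
  · intro i hi
    set S := {y : ℕ | ∃ x, (h (i - 1, 0)).1 ≤ x ∧ x ≤ (h (i, 0)).1 - 1 ∧
      c (x, y) = d} with hS
    intro hfin
    -- the range of n ↦ h (i-1, n) is infinite
    have hinj : Function.Injective (fun n : ℕ => h (i - 1, n)) := by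
      intro a b hab
      simp only at hab
      by_contra hne
      rcases Nat.lt_or_ge a b with hlt' | hge
      · exact lexlt2_irrefl _ (hab ▸ hemb (i - 1, a) (i - 1, b) (Or.inr ⟨rfl, hlt'⟩))
      · have : b < a := by omega
        exact lexlt2_irrefl _ (hab ▸ hemb (i - 1, b) (i - 1, a) (Or.inr ⟨rfl, this⟩))
    have hPinf : (Set.range (fun n : ℕ => h (i - 1, n))).Infinite :=
      Set.infinite_range_of_injective hinj
    have hi1 : i - 1 + 1 = i := by omega
    have hsub : Set.range (fun n : ℕ => h (i - 1, n)) ⊆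
        (Set.Icc (h (i - 1, 0)).1 ((h (i, 0)).1 - 1)) ×ˢ S := by
      rintro p ⟨n, rfl⟩
      simp only
      have h1 : (h (i - 1, n)).1 < (h (i, 0)).1 := by
        have := hlt (i - 1) n; rwa [hi1] at this
      refine ⟨⟨hlow (i - 1) n, by omega⟩, ?_⟩
      exact ⟨(h (i - 1, n)).1, hlow (i - 1) n, by omega, by
        rw [Prod.mk.eta]; exact hconst (i - 1, n)⟩
    exact hPinf (Set.Finite.subset (Set.Finite.prod (Set.finite_Icc _ _) hfin) hsub)
end

section
/- For any coloring c : ℕ^n → Fin k, there is no family (σ_d)_{d<k} of winning strategies for Player ⊖ in the games G_n(c) where Player ⊕'s first move is d. Concretely: there do not exist functions σ_d : (list of at most n−1 naturals) → ℕ such that for every d < k and every sequence b₁,…,bₙ with σ_d(⟨⟩) ≤ b₁, σ_d(⟨b₁⟩) ≤ b₂, …, σ_d(⟨b₁,…,b_{n−1}⟩) ≤ bₙ, we have c(b₁,…,bₙ) ≠ d. -/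
theorem stmt12 {n k : ℕ} (hn : 0 < n) (hk : 0 < k) (c : (Fin n → ℕ) → Fin k) :
    ¬ ∃ σ : Fin k → List ℕ → ℕ,
        ∀ d : Fin k, ∀ b : Fin n → ℕ,
          (∀ i : Fin n,
            σ d (List.ofFn fun j : Fin i.val => b ⟨j.val, lt_trans j.isLt i.isLt⟩) ≤ b i) →
          c b ≠ d := by
  rintro ⟨σ, hσ⟩
  -- S l : the max of all strategies' demands after history l
  set S : List ℕ → ℕ := fun l => Finset.univ.sup fun d : Fin k => σ d l with hS
  -- L m : the history after m moves, always playing S of the current history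
  set L : ℕ → List ℕ := fun m => Nat.rec [] (fun _ ih => ih ++ [S ih]) m with hL
  have hLsucc : ∀ m, L (m + 1) = L m ++ [S (L m)] := fun m => rfl
  set b : Fin n → ℕ := fun i => S (L i.val) with hb
  have claim : ∀ m, (List.ofFn fun j : Fin m => S (L j.val)) = L m := by
    intro m
    induction m with
    | zero => rfl
    | succ m ih =>
      rw [List.ofFn_succ', hLsucc, List.concat_eq_append]
      simp only [Fin.coe_castSucc, Fin.val_last, ih]
  have key : ∀ i : Fin n,
      σ (c b) (List.ofFn fun j : Fin i.val => b ⟨j.val, lt_trans j.isLt i.isLt⟩) ≤ b i := by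
    intro i
    have : (List.ofFn fun j : Fin i.val => b ⟨j.val, lt_trans j.isLt i.isLt⟩) = L i.val :=
      claim i.val
    rw [this]
    exact Finset.le_sup (f := fun d : Fin k => σ d (L i.val)) (Finset.mem_univ (c b))
  exact hσ (c b) b key rfl
end

section
/- For k ≥ 1, the statement 'Player ⊕ has a winning strategy in G₂(c) for every coloring c : ℕ² → Fin k' is equivalent to the Weak Ramsey Theorem for pairs WRT²_k: for every c : ℕ² → Fin k there are a color d and an infinite H ⊆ ℕ such that {y : c(x,y) = d} is infinite for every x ∈ H. -/
/-- Player ⊕ has a winning strategy in the game `G₂(c)`: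
a color `d`, a response `b₁ a₁ ≥ a₁` to Player ⊖'s first move, and a response
`b₂ a₁ a₂ ≥ a₂` to the second, always producing a pair of color `d`. -/
def PlusWins2 {k : ℕ} (c : ℕ → ℕ → Fin k) : Prop :=
  ∃ d : Fin k, ∃ b₁ : ℕ → ℕ, ∃ b₂ : ℕ → ℕ → ℕ,
    (∀ a₁, a₁ ≤ b₁ a₁) ∧ (∀ a₁ a₂, a₂ ≤ b₂ a₁ a₂) ∧
    ∀ a₁ a₂, c (b₁ a₁) (b₂ a₁ a₂) = d

theorem stmt14 {k : ℕ} (hk : 1 ≤ k) :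
    (∀ c : ℕ → ℕ → Fin k, PlusWins2 c) ↔
      (∀ c : ℕ → ℕ → Fin k, ∃ d : Fin k, ∃ H : Set ℕ, H.Infinite ∧
        ∀ x ∈ H, {y : ℕ | c x y = d}.Infinite) := by
  constructor
  · intro h c
    obtain ⟨d, b₁, b₂, hb₁, hb₂, hwin⟩ := h c
    refine ⟨d, Set.range b₁, ?_, ?_⟩
    · apply Set.infinite_of_forall_exists_gt
      intro a
      exact ⟨b₁ (a + 1), ⟨a + 1, rfl⟩, lt_of_lt_of_le (Nat.lt_succ_self a) (hb₁ _)⟩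
    · rintro x ⟨a₁, rfl⟩
      apply Set.infinite_of_forall_exists_gt
      intro a
      exact ⟨b₂ a₁ (a + 1), hwin a₁ (a + 1),
        lt_of_lt_of_le (Nat.lt_succ_self a) (hb₂ _ _)⟩
  · intro h c
    obtain ⟨d, H, hH, hfib⟩ := h c
    choose b₁ hb₁H hb₁ using fun a => hH.exists_gt a
    choose b₂ hb₂c hb₂ using fun a₁ a₂ => (hfib (b₁ a₁) (hb₁H a₁)).exists_gt a₂
    exact ⟨d, b₁, b₂, fun a₁ => (hb₁ a₁).le, fun a₁ a₂ => (hb₂ a₁ a₂).le,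
      fun a₁ a₂ => hb₂c a₁ a₂⟩
end

section
/- There is no strict order embedding of ℕ³ with the lexicographic order into ℕ² with the lexicographic order; equivalently, for n > m there is no lexicographic embedding ℕ^n → ℕ^m. -/
lemma lexLt_of_fst_lt {k : ℕ} {x y : Fin (k+1) → ℕ} (h : x 0 < y 0) : LexLt x y :=
  ⟨0, Nat.succ_pos k, Nat.succ_pos k,
    fun j hj => absurd hj (Nat.not_lt_zero j), by simpa using h⟩

lemma fst_le_of_lexLt {k : ℕ} {x y : Fin (k+1) → ℕ} (h : LexLt x y) : x 0 ≤ y 0 := by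
  obtain ⟨i, hi, hi', heq, hlt⟩ := h
  rcases Nat.eq_zero_or_pos i with rfl | hpos
  · simpa using le_of_lt hlt
  · have := heq 0 hpos
    simpa using le_of_eq this

lemma lexLt_tail {k : ℕ} {x y : Fin (k+1) → ℕ} (h : LexLt x y) (h0 : x 0 = y 0) :
    LexLt (Fin.tail x) (Fin.tail y) := by
  obtain ⟨i, hi, hi', heq, hlt⟩ := h
  rcases Nat.eq_zero_or_pos i with rfl | hpos
  · exfalso
    have : x 0 < y 0 := by simpa using hlt
    omega
  · obtain ⟨i', rfl⟩ := Nat.exists_eq_succ_of_ne_zero (Nat.pos_iff_ne_zero.mp hpos)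
    refine ⟨i', Nat.lt_of_succ_lt_succ hi, Nat.lt_of_succ_lt_succ hi', ?_, ?_⟩
    · intro j hj
      have := heq (j+1) (Nat.succ_lt_succ hj)
      simpa [Fin.tail, Fin.succ_mk] using this
    · simpa [Fin.tail, Fin.succ_mk] using hlt

lemma lexLt_cons {k : ℕ} (a : ℕ) {x y : Fin k → ℕ} (h : LexLt x y) :
    LexLt (Fin.cons a x : Fin (k+1) → ℕ) (Fin.cons a y) := by
  obtain ⟨i, hi, hi', heq, hlt⟩ := h
  refine ⟨i+1, Nat.succ_lt_succ hi, Nat.succ_lt_succ hi', ?_, ?_⟩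
  · intro j hj
    rcases Nat.eq_zero_or_pos j with rfl | hpos
    · simp
    · obtain ⟨j', rfl⟩ := Nat.exists_eq_succ_of_ne_zero (Nat.pos_iff_ne_zero.mp hpos)
      have hj' : j' < i := Nat.lt_of_succ_lt_succ hj
      show (Fin.cons a x : Fin (k+1) → ℕ) (Fin.succ ⟨j', lt_trans hj' hi⟩) =
          (Fin.cons a y : Fin (k+1) → ℕ) (Fin.succ ⟨j', lt_trans hj' hi'⟩)
      rw [Fin.cons_succ, Fin.cons_succ]
      exact heq j' hj'
  · show (Fin.cons a x : Fin (k+1) → ℕ) (Fin.succ ⟨i, hi⟩) < (Fin.cons a y : Fin (k+1) → ℕ) (Fin.succ ⟨i, hi'⟩)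
    rw [Fin.cons_succ, Fin.cons_succ]
    exact hlt

lemma key_s18 : ∀ m : ℕ, ∀ f : (Fin (m+1) → ℕ) → (Fin m → ℕ),
    ¬ (∀ x y, LexLt x y → LexLt (f x) (f y)) := by
  intro m
  induction m with
  | zero =>
    intro f hf
    have h1 : LexLt (fun _ : Fin 1 => 0) (fun _ : Fin 1 => 1) :=
      ⟨0, one_pos, one_pos, fun j hj => absurd hj (Nat.not_lt_zero j), zero_lt_one⟩
    obtain ⟨i, hi, hi', _, _⟩ := hf _ _ h1
    exact absurd hi' (Nat.not_lt_zero i)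
  | succ m ih =>
    intro f hf
    classical
    -- restrict to tuples with first coordinate 0
    set F : (Fin (m+1) → ℕ) → (Fin (m+1) → ℕ) :=
      fun x => f (Fin.cons 0 x) with hF
    have hFmono : ∀ x y, LexLt x y → LexLt (F x) (F y) :=
      fun x y h => hf _ _ (lexLt_cons 0 h)
    -- first coordinates of F are bounded
    set B : ℕ := f (Fin.cons 1 (fun _ => 0) : Fin (m+2) → ℕ) 0 with hB
    have hbound : ∀ x, F x 0 ≤ B := by
      intro x
      have hlt : LexLt (Fin.cons 0 x : Fin (m+2) → ℕ) (Fin.cons 1 (fun _ => 0) : Fin (m+2) → ℕ) := by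
        apply lexLt_of_fst_lt
        simp
      exact fst_le_of_lexLt (hf _ _ hlt)
    -- v is the max attained first coordinate
    set v : ℕ := Nat.findGreatest (fun c => ∃ x, F x 0 = c) B with hv
    have hle : ∀ x, F x 0 ≤ v := fun x => Nat.le_findGreatest (hbound x) ⟨x, rfl⟩
    obtain ⟨x0, hx0⟩ : ∃ x, F x 0 = v :=
      Nat.findGreatest_spec (P := fun c => ∃ x, F x 0 = c)
        (hbound (fun _ => 0)) ⟨(fun _ => 0), rfl⟩
    -- embed into the final segment above x0
    set e : (Fin (m+1) → ℕ) → (Fin (m+1) → ℕ) :=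
      fun y i => x0 i + 1 + y i with he
    have hemono : ∀ y y', LexLt y y' → LexLt (e y) (e y') := by
      intro y y' h
      obtain ⟨i, hi, hi', heq, hlt⟩ := h
      exact ⟨i, hi, hi', fun j hj => by simp [he, heq j hj],
        by simp only [he]; omega⟩
    have hx0e : ∀ y, LexLt x0 (e y) := by
      intro y
      apply lexLt_of_fst_lt
      simp only [he]
      omega
    have hconst : ∀ y, F (e y) 0 = v := by
      intro y
      have h1 : v ≤ F (e y) 0 := hx0 ▸ fst_le_of_lexLt (hFmono _ _ (hx0e y))
      exact le_antisymm (hle _) h1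
    -- the composition drops a dimension
    apply ih (fun y => Fin.tail (F (e y)))
    intro y y' h
    exact lexLt_tail (hFmono _ _ (hemono _ _ h)) (by rw [hconst, hconst])

theorem stmt18 {n m : ℕ} (hnm : m < n) :
    ¬ ∃ h : (Fin n → ℕ) → (Fin m → ℕ),
        ∀ x y : Fin n → ℕ, LexLt x y → LexLt (h x) (h y) := by
  rintro ⟨h, hmono⟩
  have hmn : m + 1 ≤ n := hnm
  set pad : (Fin (m+1) → ℕ) → (Fin n → ℕ) :=
    fun x i => if hi : (i : ℕ) < m + 1 then x ⟨i, hi⟩ else 0 with hpad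
  have hpadmono : ∀ x y, LexLt x y → LexLt (pad x) (pad y) := by
    intro x y hxy
    obtain ⟨i, hi, hi', heq, hlt⟩ := hxy
    refine ⟨i, lt_of_lt_of_le hi hmn, lt_of_lt_of_le hi' hmn, ?_, ?_⟩
    · intro j hj
      have hjm : j < m + 1 := lt_trans hj hi
      simp only [hpad, Fin.val_mk, dif_pos hjm]
      exact heq j hj
    · simp only [hpad, Fin.val_mk, dif_pos hi, dif_pos hi']
      exact hlt
  exact key_s18 m (fun x => h (pad x)) (fun x y hxy => hmono _ _ (hpadmono _ _ hxy))
end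

section
/- For every injection f : ℕ → ℕ, define c : ℕ² → Fin 2 by c(x,y) = 1 iff x ∈ {f(0),…,f(y−1)}. If h : ℕ² → A₁ is an order isomorphism from ℕ² (lexicographic) onto A₁ = c⁻¹(1) (with the induced lexicographic order), then for every n, h(n,0)'s first coordinate is the (n+1)-th element of the range of f in increasing order. -/
theorem stmt19 (f : ℕ → ℕ) (hf : Function.Injective f)
    (c : ℕ × ℕ → Fin 2) (hc : ∀ p : ℕ × ℕ, c p = 1 ↔ ∃ m < p.2, f m = p.1)
    (A₁ : Set (ℕ × ℕ)) (hA : A₁ = {p | c p = 1})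
    (e : (ℕ × ℕ) ≃ A₁)
    (hiso : ∀ p q : ℕ × ℕ, LexLt2 p q ↔ LexLt2 (e p : ℕ × ℕ) (e q : ℕ × ℕ)) :
    ∀ n : ℕ, ((e (n, 0) : ℕ × ℕ)).1 = Nat.nth (fun x => x ∈ Set.range f) n := by
  classical
  subst hA
  set P : ℕ → Prop := fun x => x ∈ Set.range f with hP
  have hPinf : (setOf P).Infinite := by
    have : setOf P = Set.range f := rfl
    rw [this]
    exact Set.infinite_range_of_injective hf
  -- the index of x in range f
  set idx : ℕ → ℕ := fun x => Function.invFun f x with hidx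
  have hfidx : ∀ x, P x → f (idx x) = x := fun x hx => Function.invFun_eq hx
  have hidxf : ∀ m, idx (f m) = m := fun m => Function.leftInverse_invFun hf m
  -- lexLt2 is the Prod.Lex order
  have hlex : ∀ p q : ℕ × ℕ, LexLt2 p q ↔ toLex p < toLex q := by
    intro p q
    rw [Prod.Lex.lt_iff]
    rfl
  -- the set A₁ as a set of the Lex type
  set A' : Set (ℕ ×ₗ ℕ) := {p | c (ofLex p) = 1} with hA'
  -- canonical order isomorphism
  have hr := fun n => Nat.nth_mem_of_infinite (p := P) hPinf n
  set g : (ℕ ×ₗ ℕ) → A' := fun p =>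
    ⟨toLex (Nat.nth P (ofLex p).1, idx (Nat.nth P (ofLex p).1) + 1 + (ofLex p).2), by
      simp only [hA', Set.mem_setOf_eq, ofLex_toLex, hc]
      exact ⟨idx (Nat.nth P (ofLex p).1), by omega, hfidx _ (hr _)⟩⟩ with hg
  have hgmono : StrictMono g := by
    intro p q hpq
    replace hpq := Prod.Lex.lt_iff.1 hpq
    simp only [hg, Subtype.mk_lt_mk, Prod.Lex.lt_iff, ofLex_toLex]
    rcases hpq with h | ⟨h1, h2⟩
    · exact Or.inl ((Nat.nth_lt_nth hPinf).2 h)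
    · refine Or.inr ⟨by rw [h1], ?_⟩
      simp only [h1]
      omega
  have hgsurj : Function.Surjective g := by
    rintro ⟨q, hq⟩
    simp only [hA', Set.mem_setOf_eq, hc] at hq
    obtain ⟨m, hm, hfm⟩ := hq
    have hPq : P (ofLex q).1 := ⟨m, hfm⟩
    have hnth : Nat.nth P (Nat.count P (ofLex q).1) = (ofLex q).1 := Nat.nth_count hPq
    have hidxq : idx (ofLex q).1 = m := by rw [← hfm, hidxf]
    refine ⟨toLex (Nat.count P (ofLex q).1, (ofLex q).2 - m - 1), ?_⟩
    apply Subtype.ext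
    show toLex _ = q
    conv_rhs => rw [← toLex_ofLex q]
    congr 1
    ext
    · simpa using hnth
    · simp only [ofLex_toLex]
      rw [hnth, hidxq]
      omega
  set G : (ℕ ×ₗ ℕ) ≃o A' := StrictMono.orderIsoOfSurjective g hgmono hgsurj with hG
  -- the given equiv as an order isomorphism
  set F0 : (ℕ ×ₗ ℕ) → A' := fun p =>
    ⟨toLex (e (ofLex p) : ℕ × ℕ), by
      exact (e (ofLex p)).2⟩ with hF0
  have hFmono : StrictMono F0 := by
    intro p q hpq
    simp only [hF0, Subtype.mk_lt_mk]
    exact (hlex _ _).1 ((hiso (ofLex p) (ofLex q)).1 ((hlex (ofLex p) (ofLex q)).2 hpq))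
  have hFsurj : Function.Surjective F0 := by
    rintro ⟨q, hq⟩
    have hq' : (ofLex q : ℕ × ℕ) ∈ {p | c p = 1} := hq
    obtain ⟨x, hx⟩ := e.surjective ⟨ofLex q, hq'⟩
    refine ⟨toLex x, ?_⟩
    apply Subtype.ext
    show toLex ((e (ofLex (toLex x)) : ℕ × ℕ)) = q
    rw [ofLex_toLex, hx]
    rfl
  set F : (ℕ ×ₗ ℕ) ≃o A' := StrictMono.orderIsoOfSurjective F0 hFmono hFsurj with hF
  have hFG : F = G := Subsingleton.elim F G
  intro n
  have := congrArg (fun (h : (ℕ ×ₗ ℕ) ≃o A') => ((h (toLex (n, 0)) : ℕ ×ₗ ℕ) : ℕ × ℕ).1) hFG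
  simp [hF, hG, hF0, hg, StrictMono.coe_orderIsoOfSurjective] at this
  exact this
end
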